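/- Let p be a finitely supported joint distribution on U × V × X (finite sets) such that the maximum of F(p) := I(U;Y₁) + I(V;Y₂) - I(U;V) over all couplings (U,V,X) → (Y₁,Y₂) through fixed channels is attained at p, and suppose X is a deterministic function of (U,V) under p. If |U| > |X|, then there exists a distribution q with strictly smaller support of U (|supp(U)| ≤ |U| - 1), with X still a deterministic function of (U,V) and the same marginal distribution of X, such that F(q) = F(p). -/

import Mathlib

open scoped BigOperators

/-- Mutual information (base-2) of two finitely-valued random variables given
their joint probability mass function. -/
noncomputable def mutInf {A B : Type*} [Fintype A] [Fintype B] (p : A → B → ℝ) : ℝ :=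
  ∑ a, ∑ b, p a b * Real.logb 2 (p a b / ((∑ b', p a b') * (∑ a', p a' b)))

/-- `F p = I(U;Y₁) + I(V;Y₂) - I(U;V)` for the joint distribution `p` on `U × V × X`
passed through fixed channels `W1 : X → Y₁` and `W2 : X → Y₂`. -/
noncomputable def FMarton {U V X Y1 Y2 : Type*}
    [Fintype U] [Fintype V] [Fintype X] [Fintype Y1] [Fintype Y2]
    (W1 : X → Y1 → ℝ) (W2 : X → Y2 → ℝ) (p : U → V → X → ℝ) : ℝ :=
  mutInf (fun u y1 => ∑ v, ∑ x, p u v x * W1 x y1)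
    + mutInf (fun v y2 => ∑ u, ∑ x, p u v x * W2 x y2)
    - mutInf (fun u v => ∑ x, p u v x)

/-! Perturb `p` multiplicatively in `u` only: `q_w(u,v,x) = w(u) p(u,v,x)` with `w ≥ 0` and the
`X`-marginal (hence the `Y₁`- and `Y₂`-marginals) unchanged. Writing each mutual information as
`H(A) + H(B) - H(A,B)`, the terms `H(Y₁|U)` and `H(V|U)` are affine in `w`, the entropies of `Y₁`
and `Y₂` are constant, the two `H(V)` terms cancel, and what remains is `-H(V,Y₂)`, convex in `w`.
So `w ↦ F(q_w)` is convex. If `|U| > |X|`, some `L ≠ 0` on `U` is orthogonal to every column of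
`p(u,x)`; with `w = 1 ± L / L(u₀)` for `u₀` maximising `|L|` both perturbations are admissible,
`F(p)` is at most their average and at least each of them, so `F(q_{1 - L/L(u₀)}) = F(p)` and
this `q` gives `u₀` no mass. -/

open Finset Real

noncomputable def mulLogb (t : ℝ) : ℝ := t * logb 2 t

lemma mulLogb_eq_neg_negMulLog_div (t : ℝ) : mulLogb t = -negMulLog t / log 2 := by
  simp only [mulLogb, negMulLog, logb]; ring

lemma mulLogb_mul (s t : ℝ) : mulLogb (s * t) = t * mulLogb s + s * mulLogb t := by
  simp only [mulLogb_eq_neg_negMulLog_div, negMulLog_mul]; ring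

lemma convexOn_mulLogb : ConvexOn ℝ (Set.Ici 0) mulLogb := by
  refine (convexOn_mul_log.smul (inv_nonneg.2 (log_pos one_lt_two).le)).congr fun t _ => ?_
  simp only [mulLogb, logb, smul_eq_mul]; ring

lemma mulLogb_midpoint_le {s t : ℝ} (hs : 0 ≤ s) (ht : 0 ≤ t) :
    mulLogb ((s + t) / 2) ≤ (mulLogb s + mulLogb t) / 2 := by
  have h := convexOn_mulLogb.2 (Set.mem_Ici.2 hs) (Set.mem_Ici.2 ht)
    (by norm_num : (0 : ℝ) ≤ 1 / 2) (by norm_num : (0 : ℝ) ≤ 1 / 2) (by norm_num)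
  simp only [smul_eq_mul] at h
  calc mulLogb ((s + t) / 2) = mulLogb (1 / 2 * s + 1 / 2 * t) := by ring_nf
    _ ≤ 1 / 2 * mulLogb s + 1 / 2 * mulLogb t := h
    _ = (mulLogb s + mulLogb t) / 2 := by ring

lemma mul_logb_div_mul_eq {r a b : ℝ} (hr : 0 ≤ r) (hra : r ≤ a) (hrb : r ≤ b) :
    r * logb 2 (r / (a * b)) = mulLogb r - r * logb 2 a - r * logb 2 b := by
  rcases hr.eq_or_lt with rfl | hr
  · simp [mulLogb]
  · rw [logb_div hr.ne' (mul_pos (by linarith) (by linarith)).ne',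
      logb_mul (by linarith) (by linarith), mulLogb]
    ring

section MutualInformation

variable {A B : Type*} [Fintype A] [Fintype B]

/-- `I(A;B) = H(A) + H(B) - H(A,B)`, with `-mulLogb` as the entropy summand. -/
lemma mutInf_eq_sum_mulLogb (r : A → B → ℝ) (hr : ∀ a b, 0 ≤ r a b) :
    mutInf r = ∑ a, ∑ b, mulLogb (r a b) - ∑ a, mulLogb (∑ b, r a b)
      - ∑ b, mulLogb (∑ a, r a b) := by
  have hrow (a : A) (b : B) : r a b ≤ ∑ b', r a b' :=
    single_le_sum (fun b' _ => hr a b') (mem_univ b)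
  have hcol (a : A) (b : B) : r a b ≤ ∑ a', r a' b :=
    single_le_sum (fun a' _ => hr a' b) (mem_univ a)
  simp only [mutInf, mul_logb_div_mul_eq (hr _ _) (hrow _ _) (hcol _ _), sum_sub_distrib]
  rw [sum_comm (f := fun a b => r a b * logb 2 (∑ a', r a' b))]
  simp only [mulLogb, ← sum_mul]

lemma mutInf_mul_rows (w : A → ℝ) (r : A → B → ℝ) (hw : ∀ a, 0 ≤ w a)
    (hr : ∀ a b, 0 ≤ r a b) :
    mutInf (fun a b => w a * r a b) =
      ∑ a, w a * (∑ b, mulLogb (r a b) - mulLogb (∑ b, r a b))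
        - ∑ b, mulLogb (∑ a, w a * r a b) := by
  rw [mutInf_eq_sum_mulLogb _ fun a b => mul_nonneg (hw a) (hr a b)]
  simp only [← mul_sum, mulLogb_mul, sum_add_distrib, ← sum_mul, mul_sub, sum_sub_distrib]
  ring

end MutualInformation

lemma sum_sum_mul_eq_sum {X Y : Type*} [Fintype X] [Fintype Y] (W : X → Y → ℝ)
    (hW : ∀ x, ∑ y, W x y = 1) (a : X → ℝ) :
    ∑ y, ∑ x, a x * W x y = ∑ x, a x := by
  rw [sum_comm]
  simp only [← mul_sum, hW, mul_one]

lemma sum_midpoint_mul {ι : Type*} (s : Finset ι) (w w' c : ι → ℝ) :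
    ∑ i ∈ s, (w i + w' i) / 2 * c i = (∑ i ∈ s, w i * c i + ∑ i ∈ s, w' i * c i) / 2 := by
  rw [← sum_add_distrib, sum_div]
  exact sum_congr rfl fun i _ => by ring

lemma exists_ne_zero_sum_mul_eq_zero {K ι κ : Type*} [Field K] [Fintype ι] [Fintype κ]
    (A : ι → κ → K) (h : Fintype.card κ < Fintype.card ι) :
    ∃ L : ι → K, (∀ k, ∑ i, L i * A i k = 0) ∧ ∃ i, L i ≠ 0 := by
  have hA : ¬ LinearIndependent K A := fun hli =>
    (hli.fintype_card_le_finrank.trans_eq (Module.finrank_fintype_fun_eq_card K)).not_gt h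
  obtain ⟨L, hL, i, hi⟩ := Fintype.not_linearIndependent_iff.1 hA
  exact ⟨L, fun k => by simpa using congrFun hL k, i, hi⟩

lemma exists_abs_mul_le_one_of_ne_zero {ι : Type*} [Finite ι] {L : ι → ℝ} {i : ι}
    (hi : L i ≠ 0) : ∃ (c : ℝ) (i₀ : ι), (∀ j, |c * L j| ≤ 1) ∧ c * L i₀ = 1 := by
  have : Nonempty ι := ⟨i⟩
  obtain ⟨i₀, hi₀⟩ := Finite.exists_max fun j => |L j|
  have hL₀ : 0 < |L i₀| := (abs_pos.2 hi).trans_le (hi₀ i)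
  refine ⟨(L i₀)⁻¹, i₀, fun j => ?_, inv_mul_cancel₀ (abs_pos.1 hL₀)⟩
  rw [abs_mul, abs_inv, inv_mul_le_one₀ hL₀]
  exact hi₀ j

lemma sum_one_add_mul_mul {ι : Type*} (s : Finset ι) {L a : ι → ℝ}
    (hL : ∑ i ∈ s, L i * a i = 0) (d : ℝ) :
    ∑ i ∈ s, (1 + d * L i) * a i = ∑ i ∈ s, a i := by
  simp only [add_mul, one_mul, sum_add_distrib, mul_assoc, ← mul_sum, hL, mul_zero, add_zero]

section Reweighting

variable {U V X Y1 Y2 : Type*}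

def reweight (p : U → V → X → ℝ) (w : U → ℝ) : U → V → X → ℝ := fun u v x => w u * p u v x

variable [Fintype U] [Fintype V]

lemma sum_sum_reweight (p : U → V → X → ℝ) (w : U → ℝ) (x : X) :
    ∑ u, ∑ v, reweight p w u v x = ∑ u, w u * ∑ v, p u v x := by
  simp only [reweight, mul_sum]

variable [Fintype X]

lemma sum_sum_sum_comm (r : U → V → X → ℝ) :
    ∑ u, ∑ v, ∑ x, r u v x = ∑ x, ∑ u, ∑ v, r u v x := by
  simp only [sum_comm (γ := X)]

lemma sum_sum_sum_eq_of_marginal_eq {p q : U → V → X → ℝ}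
    (h : ∀ x, ∑ u, ∑ v, q u v x = ∑ u, ∑ v, p u v x) :
    ∑ u, ∑ v, ∑ x, q u v x = ∑ u, ∑ v, ∑ x, p u v x := by
  rw [sum_sum_sum_comm q, sum_sum_sum_comm p, sum_congr rfl fun x _ => h x]

lemma sum_mul_sum_sum_mul {Y : Type*} (p : U → V → X → ℝ) (w : U → ℝ) (W : X → Y → ℝ) (y : Y) :
    ∑ u, w u * ∑ v, ∑ x, p u v x * W x y = ∑ x, (∑ u, w u * ∑ v, p u v x) * W x y := by
  simp only [mul_sum, sum_mul, mul_assoc]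
  exact sum_sum_sum_comm _

variable [Fintype Y1] [Fintype Y2]

lemma exists_FMarton_reweight_eq (W1 : X → Y1 → ℝ) (W2 : X → Y2 → ℝ)
    (hW1nn : ∀ x y, 0 ≤ W1 x y) (hW2nn : ∀ x y, 0 ≤ W2 x y) (hW2sum : ∀ x, ∑ y, W2 x y = 1)
    (p : U → V → X → ℝ) (hpnn : ∀ u v x, 0 ≤ p u v x) :
    ∃ (c : U → ℝ) (K : ℝ), ∀ w : U → ℝ, (∀ u, 0 ≤ w u) →
      (∀ x, ∑ u, ∑ v, reweight p w u v x = ∑ u, ∑ v, p u v x) →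
      FMarton W1 W2 (reweight p w) =
        ∑ u, w u * c u + K + ∑ v, ∑ y, mulLogb (∑ u, w u * ∑ x, p u v x * W2 x y) := by
  set P1 : U → Y1 → ℝ := fun u y => ∑ v, ∑ x, p u v x * W1 x y
  set P12 : U → V → ℝ := fun u v => ∑ x, p u v x
  set pX : X → ℝ := fun x => ∑ u, ∑ v, p u v x
  refine ⟨fun u => (∑ y, mulLogb (P1 u y) - mulLogb (∑ y, P1 u y))
      - (∑ v, mulLogb (P12 u v) - mulLogb (∑ v, P12 u v)),
    -∑ y, mulLogb (∑ x, pX x * W1 x y) - ∑ y, mulLogb (∑ x, pX x * W2 x y),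
    fun w hw hwX => ?_⟩
  simp only [sum_sum_reweight] at hwX
  have hQ1 : (fun u y => ∑ v, ∑ x, reweight p w u v x * W1 x y) = fun u y => w u * P1 u y := by
    ext u y; simp only [P1, reweight, mul_sum, mul_assoc]
  have hQ2 : (fun v y => ∑ u, ∑ x, reweight p w u v x * W2 x y) =
      fun v y => ∑ u, w u * ∑ x, p u v x * W2 x y := by
    ext v y; simp only [reweight, mul_sum, mul_assoc]
  have hQ12 : (fun u v => ∑ x, reweight p w u v x) = fun u v => w u * P12 u v := by
    ext u v; simp only [P12, reweight, mul_sum]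
  have hP1nn (u : U) (y : Y1) : 0 ≤ P1 u y :=
    sum_nonneg fun v _ => sum_nonneg fun x _ => mul_nonneg (hpnn u v x) (hW1nn x y)
  have hP12nn (u : U) (v : V) : 0 ≤ P12 u v := sum_nonneg fun x _ => hpnn u v x
  have hQ2nn (v : V) (y : Y2) : 0 ≤ ∑ u, w u * ∑ x, p u v x * W2 x y :=
    sum_nonneg fun u _ => mul_nonneg (hw u) (sum_nonneg fun x _ => mul_nonneg (hpnn u v x) (hW2nn x y))
  have hcol1 (y : Y1) : ∑ u, w u * P1 u y = ∑ x, pX x * W1 x y := by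
    rw [sum_mul_sum_sum_mul]; simp only [hwX, pX]
  have hcol2 (y : Y2) : ∑ v, ∑ u, w u * ∑ x, p u v x * W2 x y = ∑ x, pX x * W2 x y := by
    rw [sum_comm]; simp only [← mul_sum]; rw [sum_mul_sum_sum_mul]; simp only [hwX, pX]
  have hrow2 (v : V) : ∑ y, ∑ u, w u * ∑ x, p u v x * W2 x y = ∑ u, w u * P12 u v := by
    rw [sum_comm]; simp only [← mul_sum, sum_sum_mul_eq_sum W2 hW2sum, P12]
  rw [FMarton, hQ1, hQ2, hQ12, mutInf_mul_rows w P1 hw hP1nn, mutInf_mul_rows w P12 hw hP12nn,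
    mutInf_eq_sum_mulLogb _ hQ2nn]
  simp only [hcol1, hcol2, hrow2, mul_sub, sum_sub_distrib]
  ring

lemma FMarton_reweight_midpoint_le (W1 : X → Y1 → ℝ) (W2 : X → Y2 → ℝ)
    (hW1nn : ∀ x y, 0 ≤ W1 x y) (hW2nn : ∀ x y, 0 ≤ W2 x y) (hW2sum : ∀ x, ∑ y, W2 x y = 1)
    (p : U → V → X → ℝ) (hpnn : ∀ u v x, 0 ≤ p u v x) {w w' : U → ℝ}
    (hw : ∀ u, 0 ≤ w u) (hwX : ∀ x, ∑ u, ∑ v, reweight p w u v x = ∑ u, ∑ v, p u v x)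
    (hw' : ∀ u, 0 ≤ w' u) (hw'X : ∀ x, ∑ u, ∑ v, reweight p w' u v x = ∑ u, ∑ v, p u v x) :
    FMarton W1 W2 (reweight p fun u => (w u + w' u) / 2) ≤
      (FMarton W1 W2 (reweight p w) + FMarton W1 W2 (reweight p w')) / 2 := by
  obtain ⟨c, K, hF⟩ := exists_FMarton_reweight_eq W1 W2 hW1nn hW2nn hW2sum p hpnn
  have hmid : ∀ u, 0 ≤ (w u + w' u) / 2 := fun u => by linarith [hw u, hw' u]
  have hmidX (x : X) :
      ∑ u, ∑ v, reweight p (fun u => (w u + w' u) / 2) u v x = ∑ u, ∑ v, p u v x := by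
    rw [sum_sum_reweight, sum_midpoint_mul, ← sum_sum_reweight, ← sum_sum_reweight, hwX, hw'X]
    ring
  have hconv (v : V) (y : Y2) :
      mulLogb (∑ u, (w u + w' u) / 2 * ∑ x, p u v x * W2 x y) ≤
        (mulLogb (∑ u, w u * ∑ x, p u v x * W2 x y)
          + mulLogb (∑ u, w' u * ∑ x, p u v x * W2 x y)) / 2 := by
    have ha (u : U) : 0 ≤ ∑ x, p u v x * W2 x y :=
      sum_nonneg fun x _ => mul_nonneg (hpnn u v x) (hW2nn x y)
    rw [sum_midpoint_mul]
    exact mulLogb_midpoint_le (sum_nonneg fun u _ => mul_nonneg (hw u) (ha u))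
      (sum_nonneg fun u _ => mul_nonneg (hw' u) (ha u))
  have hconv_sum : ∑ v, ∑ y, mulLogb (∑ u, (w u + w' u) / 2 * ∑ x, p u v x * W2 x y) ≤
      (∑ v, ∑ y, mulLogb (∑ u, w u * ∑ x, p u v x * W2 x y)
        + ∑ v, ∑ y, mulLogb (∑ u, w' u * ∑ x, p u v x * W2 x y)) / 2 := by
    refine (sum_le_sum fun v _ => sum_le_sum fun y _ => hconv v y).trans_eq ?_
    simp only [add_div, sum_add_distrib, sum_div]
  rw [hF _ hmid hmidX, hF w hw hwX, hF w' hw' hw'X, sum_midpoint_mul]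
  linarith

end Reweighting

theorem stmt_18_general {U V X Y1 Y2 : Type*}
    [Fintype U] [Fintype V] [Fintype X] [Fintype Y1] [Fintype Y2]
    (W1 : X → Y1 → ℝ) (W2 : X → Y2 → ℝ)
    (hW1nn : ∀ x y, 0 ≤ W1 x y)
    (hW2nn : ∀ x y, 0 ≤ W2 x y) (hW2sum : ∀ x, ∑ y, W2 x y = 1)
    (p : U → V → X → ℝ)
    (hpnn : ∀ u v x, 0 ≤ p u v x)
    (hpsum : ∑ u, ∑ v, ∑ x, p u v x = 1)
    (f : U → V → X) (hdet : ∀ u v x, x ≠ f u v → p u v x = 0)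
    (hmax : ∀ q : U → V → X → ℝ, (∀ u v x, 0 ≤ q u v x) →
      (∑ u, ∑ v, ∑ x, q u v x) = 1 → FMarton W1 W2 q ≤ FMarton W1 W2 p)
    (hcard : Fintype.card X < Fintype.card U) :
    ∃ q : U → V → X → ℝ,
      (∀ u v x, 0 ≤ q u v x) ∧
      (∑ u, ∑ v, ∑ x, q u v x) = 1 ∧
      (∃ f' : U → V → X, ∀ u v x, x ≠ f' u v → q u v x = 0) ∧
      (∀ x, (∑ u, ∑ v, q u v x) = ∑ u, ∑ v, p u v x) ∧
      (∃ u0 : U, ∀ v x, q u0 v x = 0) ∧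
      FMarton W1 W2 q = FMarton W1 W2 p := by
  obtain ⟨L, hL, u₁, hu₁⟩ := exists_ne_zero_sum_mul_eq_zero (fun u x => ∑ v, p u v x) hcard
  obtain ⟨c, u₀, hcL, hcL₀⟩ := exists_abs_mul_le_one_of_ne_zero hu₁
  have hmarg (d : ℝ) (x : X) :
      ∑ u, ∑ v, reweight p (fun u => 1 + d * L u) u v x = ∑ u, ∑ v, p u v x := by
    rw [sum_sum_reweight, sum_one_add_mul_mul _ (hL x)]
  have hsum (d : ℝ) : ∑ u, ∑ v, ∑ x, reweight p (fun u => 1 + d * L u) u v x = 1 :=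
    (sum_sum_sum_eq_of_marginal_eq (hmarg d)).trans hpsum
  have hw (u : U) : 0 ≤ 1 + -c * L u := by linarith [(abs_le.1 (hcL u)).2]
  have hw' (u : U) : 0 ≤ 1 + c * L u := by linarith [(abs_le.1 (hcL u)).1]
  have hnn {d : ℝ} (hd : ∀ u, 0 ≤ 1 + d * L u) (u : U) (v : V) (x : X) :
      0 ≤ reweight p (fun u => 1 + d * L u) u v x := mul_nonneg (hd u) (hpnn u v x)
  have hmid : FMarton W1 W2 p ≤ (FMarton W1 W2 (reweight p fun u => 1 + -c * L u)
      + FMarton W1 W2 (reweight p fun u => 1 + c * L u)) / 2 := by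
    convert FMarton_reweight_midpoint_le W1 W2 hW1nn hW2nn hW2sum p hpnn hw (hmarg (-c)) hw'
      (hmarg c) using 2
    ext u v x; simp only [reweight]; ring
  refine ⟨reweight p fun u => 1 + -c * L u, hnn hw, hsum (-c), ⟨f, fun u v x hx => ?_⟩,
    hmarg (-c), ⟨u₀, fun v x => ?_⟩, ?_⟩
  · simp only [reweight, hdet u v x hx, mul_zero]
  · simp only [reweight, neg_mul, hcL₀, add_neg_cancel, zero_mul]
  · linarith [hmax _ (hnn hw) (hsum (-c)), hmax _ (hnn hw') (hsum c)]

theorem stmt_18 {U V X Y1 Y2 : Type*}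
    [Fintype U] [Fintype V] [Fintype X] [Fintype Y1] [Fintype Y2]
    (W1 : X → Y1 → ℝ) (W2 : X → Y2 → ℝ)
    (hW1nn : ∀ x y, 0 ≤ W1 x y) (hW1sum : ∀ x, ∑ y, W1 x y = 1)
    (hW2nn : ∀ x y, 0 ≤ W2 x y) (hW2sum : ∀ x, ∑ y, W2 x y = 1)
    (p : U → V → X → ℝ)
    (hpnn : ∀ u v x, 0 ≤ p u v x)
    (hpsum : ∑ u, ∑ v, ∑ x, p u v x = 1)
    (f : U → V → X) (hdet : ∀ u v x, x ≠ f u v → p u v x = 0)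
    (hmax : ∀ q : U → V → X → ℝ, (∀ u v x, 0 ≤ q u v x) →
      (∑ u, ∑ v, ∑ x, q u v x) = 1 → FMarton W1 W2 q ≤ FMarton W1 W2 p)
    (hcard : Fintype.card X < Fintype.card U) :
    ∃ q : U → V → X → ℝ,
      (∀ u v x, 0 ≤ q u v x) ∧
      (∑ u, ∑ v, ∑ x, q u v x) = 1 ∧
      (∃ f' : U → V → X, ∀ u v x, x ≠ f' u v → q u v x = 0) ∧
      (∀ x, (∑ u, ∑ v, q u v x) = ∑ u, ∑ v, p u v x) ∧
      (∃ u0 : U, ∀ v x, q u0 v x = 0) ∧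
      FMarton W1 W2 q = FMarton W1 W2 p :=
  stmt_18_general W1 W2 hW1nn hW2nn hW2sum p hpnn hpsum f hdet hmax hcard
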